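/- arXiv:2106.13983 — 2 statements merged into one kernel-verified Lean document; each statement's English description precedes it below -/
import Mathlib

section
/- Let K be a number field with ring of integers O_K and 𝔫 a nonzero ideal. Let 𝔞, 𝔟 be ideals dividing 𝔫 and u, v ∈ O_K. Then the number of units a of O_K/𝔫 with a ≡ u (mod 𝔞) and a ≡ v (mod 𝔟) equals φ(𝔫)/φ(lcm(𝔞,𝔟)) if u is coprime to 𝔞, v is coprime to 𝔟, and u ≡ v (mod gcd(𝔞,𝔟)); otherwise it equals 0. -/
/-!
Reduction modulo `𝔞 ⊓ 𝔟` is a surjective homomorphism `(𝓞 K ⧸ 𝔫)ˣ → (𝓞 K ⧸ (𝔞 ⊓ 𝔟))ˣ`, since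
units lift along any surjection out of a finite ring. By the Chinese remainder theorem the two
congruences on `a` say exactly that `a ≡ w (mod 𝔞 ⊓ 𝔟)` for a class `w`, which exists iff
`u ≡ v (mod 𝔞 ⊔ 𝔟)` and is a unit iff `u` and `v` are coprime to `𝔞` and `𝔟`. So the count is
either `0` or the size `φ(𝔫)/φ(𝔞 ⊓ 𝔟)` of a fibre of that homomorphism.
-/

open NumberField

theorem Units.map_surjective_of_finite {S T : Type*} [CommRing S] [CommRing T] [Finite S]
    {f : S →+* T} (hf : Function.Surjective f) :
    Function.Surjective (Units.map (f : S →* T)) := by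
  classical
  intro t
  obtain ⟨x, hx⟩ := hf t
  obtain ⟨z, hz⟩ := hf ↑t⁻¹
  have hxz : x * z - 1 ∈ RingHom.ker f := by simp [RingHom.mem_ker, hx, hz]
  let M := (Set.toFinite {𝔪 : Ideal S | 𝔪.IsMaximal ∧ ¬ RingHom.ker f ≤ 𝔪}).toFinset
  have hM : RingHom.ker f ⊔ M.prod id = ⊤ := Ideal.sup_prod_eq_top fun 𝔪 h𝔪 => by
    obtain ⟨hmax, hker⟩ := (Set.Finite.mem_toFinset _).mp h𝔪
    exact codisjoint_iff.mp (hmax.out.not_le_iff_codisjoint.mp hker).symm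
  obtain ⟨c, hc, j, hj, hcj⟩ := Submodule.mem_sup.mp (hM ▸ Submodule.mem_top : (1 : S) ∈ _)
  -- `y ≡ x` modulo `ker f`, and `y ≡ 1` modulo each maximal ideal not containing `ker f`.
  set y := x + c * (1 - x)
  have hy : IsUnit y := by
    by_contra hy
    obtain ⟨𝔪, hmax, hy𝔪⟩ := exists_max_ideal_of_mem_nonunits hy
    refine hmax.ne_top ((Ideal.eq_top_iff_one _).mpr ?_)
    by_cases hker : RingHom.ker f ≤ 𝔪
    · have hx𝔪 : x ∈ 𝔪 := by
        simpa [y] using 𝔪.sub_mem hy𝔪 (hker (Ideal.mul_mem_right (1 - x) _ hc))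
      simpa using 𝔪.sub_mem (𝔪.mul_mem_right z hx𝔪) (hker hxz)
    · have hj𝔪 : j ∈ 𝔪 :=
        Ideal.prod_le_inf.trans (Finset.inf_le (by simpa [M] using ⟨hmax, hker⟩)) hj
      have : 1 = y + (1 - x) * j := by linear_combination (x - 1) * hcj
      rw [this]
      exact 𝔪.add_mem hy𝔪 (𝔪.mul_mem_left _ hj𝔪)
  refine ⟨hy.unit, Units.ext ?_⟩
  simp [y, RingHom.mem_ker.mp hc, hx]

theorem MonoidHom.card_fiber_mul_card_of_surjective {G H : Type*} [Group G] [Group H]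
    {f : G →* H} (hf : Function.Surjective f) (h : H) :
    Nat.card (f ⁻¹' {h}) * Nat.card H = Nat.card G := by
  rw [Nat.card_congr (f.fiberEquivKerOfSurjective hf h), ← Subgroup.card_top (G := H),
    ← MonoidHom.range_eq_top.mpr hf, ← Subgroup.index_ker, Subgroup.card_mul_index]

namespace Ideal.Quotient

variable {R : Type*} [CommRing R]

theorem isUnit_mk_iff_span_singleton_sup_eq_top {I : Ideal R} {x : R} :
    IsUnit (mk I x) ↔ Ideal.span {x} ⊔ I = ⊤ := by
  rw [← Ideal.span_singleton_eq_top, ← Set.image_singleton, ← Ideal.map_span,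
    ← Ideal.comap_eq_top_iff (f := mk I), Ideal.comap_map_of_surjective _ mk_surjective,
    ← RingHom.ker_eq_comap_bot, Ideal.mk_ker]

theorem isUnit_mk_inf {I J : Ideal R} {x : R} (hI : IsUnit (mk I x)) (hJ : IsUnit (mk J x)) :
    IsUnit (mk (I ⊓ J) x) := by
  rw [isUnit_mk_iff_span_singleton_sup_eq_top] at hI hJ ⊢
  have := Ideal.sup_mul_eq_of_coprime_left (K := J) hI
  rw [hJ] at this
  exact top_le_iff.mp (this ▸ sup_le_sup_left Ideal.mul_le_inf _)

theorem mk_inf_eq_mk_iff {I J : Ideal R} {x y : R} :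
    mk (I ⊓ J) x = mk (I ⊓ J) y ↔ mk I x = mk I y ∧ mk J x = mk J y := by
  simp only [Ideal.Quotient.eq, Submodule.mem_inf]

theorem exists_mk_eq_mk_and_mk_eq_mk_iff {I J : Ideal R} {u v : R} :
    (∃ w, mk I w = mk I u ∧ mk J w = mk J v) ↔ mk (I ⊔ J) u = mk (I ⊔ J) v := by
  simp only [Ideal.Quotient.eq]
  constructor
  · rintro ⟨w, hwu, hwv⟩
    simpa using Submodule.add_mem_sup (I.neg_mem hwu) hwv
  · intro huv
    obtain ⟨p, hp, q, hq, hpq⟩ := Submodule.mem_sup.mp huv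
    exact ⟨u - p, by simpa using I.neg_mem hp, by
      rwa [show u - p - v = q by linear_combination -hpq]⟩

theorem isUnit_mk_of_le {I J : Ideal R} (h : I ≤ J) {x : R} (hx : IsUnit (mk I x)) :
    IsUnit (mk J x) := by
  simpa using hx.map (factor h)

theorem forall_mk_eq_imp_iff_factor_eq {I J : Ideal R} (h : I ≤ J) (a : R ⧸ I) (c : R ⧸ J) :
    (∀ y, mk I y = a → mk J y = c) ↔ factor h a = c := by
  obtain ⟨x, rfl⟩ := mk_surjective a
  refine ⟨fun H => (factor_mk h x).trans (H x rfl), fun H y hy => ?_⟩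
  rw [← factor_mk h y, hy, H]

theorem forall_mk_eq_imp_mk_eq_and_mk_eq_iff {N I J : Ideal R} (h : N ≤ I ⊓ J) {u v w : R}
    (hwu : mk I w = mk I u) (hwv : mk J w = mk J v) (a : R ⧸ N) :
    (∀ y, mk N y = a → mk I y = mk I u ∧ mk J y = mk J v) ↔ factor h a = mk (I ⊓ J) w := by
  rw [← forall_mk_eq_imp_iff_factor_eq]
  simp only [mk_inf_eq_mk_iff, hwu, hwv]

theorem card_units_fiber_factor_mul {I J : Ideal R} [Finite (R ⧸ I)] (h : I ≤ J) {c : R ⧸ J}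
    (hc : IsUnit c) :
    Nat.card {a : (R ⧸ I)ˣ // factor h a = c} * Nat.card (R ⧸ J)ˣ = Nat.card (R ⧸ I)ˣ := by
  rw [← MonoidHom.card_fiber_mul_card_of_surjective
    (Units.map_surjective_of_finite (factor_surjective h)) hc.unit]
  congr 1
  refine Nat.card_congr (Equiv.subtypeEquivRight fun a => ?_)
  rw [Set.mem_preimage, Set.mem_singleton_iff, Units.ext_iff, Units.coe_map, IsUnit.unit_spec,
    MonoidHom.coe_coe]

end Ideal.Quotient

open Classical in
/-- For a nonzero ideal `𝔫` of `𝓞 K`, ideals `𝔞, 𝔟 ∣ 𝔫` and `u, v ∈ 𝓞 K`, the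
number of units `a` of `𝓞 K ⧸ 𝔫` with `a ≡ u (mod 𝔞)` and `a ≡ v (mod 𝔟)` equals
`φ(𝔫)/φ(lcm(𝔞,𝔟))` if `u` is coprime to `𝔞`, `v` is coprime to `𝔟` and
`u ≡ v (mod gcd(𝔞,𝔟))`, and `0` otherwise.  (Here `lcm(𝔞,𝔟) = 𝔞 ⊓ 𝔟` and
`gcd(𝔞,𝔟) = 𝔞 ⊔ 𝔟`.) -/
theorem count_units_congruent_pair (K : Type*) [Field K] [NumberField K]
    (𝔫 𝔞 𝔟 : Ideal (𝓞 K)) (h𝔫 : 𝔫 ≠ ⊥) (h𝔞 : 𝔞 ∣ 𝔫) (h𝔟 : 𝔟 ∣ 𝔫) (u v : 𝓞 K) :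
    (Nat.card {a : (𝓞 K ⧸ 𝔫)ˣ //
        ∀ y : 𝓞 K, Ideal.Quotient.mk 𝔫 y = (a : 𝓞 K ⧸ 𝔫) →
          Ideal.Quotient.mk 𝔞 y = Ideal.Quotient.mk 𝔞 u ∧
          Ideal.Quotient.mk 𝔟 y = Ideal.Quotient.mk 𝔟 v} : ℚ) =
      if Ideal.span {u} ⊔ 𝔞 = ⊤ ∧ Ideal.span {v} ⊔ 𝔟 = ⊤ ∧
          Ideal.Quotient.mk (𝔞 ⊔ 𝔟) u = Ideal.Quotient.mk (𝔞 ⊔ 𝔟) v then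
        (Nat.card ((𝓞 K ⧸ 𝔫)ˣ) : ℚ) / (Nat.card ((𝓞 K ⧸ (𝔞 ⊓ 𝔟))ˣ) : ℚ)
      else 0 := by
  have h𝔞le := Ideal.le_of_dvd h𝔞
  have h𝔟le := Ideal.le_of_dvd h𝔟
  have hle : 𝔫 ≤ 𝔞 ⊓ 𝔟 := le_inf h𝔞le h𝔟le
  have : Finite (𝓞 K ⧸ 𝔫) := Ideal.finiteQuotientOfFreeOfNeBot 𝔫 h𝔫
  simp only [← Ideal.Quotient.isUnit_mk_iff_span_singleton_sup_eq_top]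
  split_ifs with hcond
  · obtain ⟨hu, hv, huv⟩ := hcond
    obtain ⟨w, hwu, hwv⟩ := Ideal.Quotient.exists_mk_eq_mk_and_mk_eq_mk_iff.mpr huv
    have hw : IsUnit (Ideal.Quotient.mk (𝔞 ⊓ 𝔟) w) :=
      Ideal.Quotient.isUnit_mk_inf (hwu ▸ hu) (hwv ▸ hv)
    have : Finite (𝓞 K ⧸ (𝔞 ⊓ 𝔟)) := Finite.of_surjective _ (Ideal.Quotient.factor_surjective hle)
    rw [Nat.card_congr (Equiv.subtypeEquivRight fun a : (𝓞 K ⧸ 𝔫)ˣ =>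
        Ideal.Quotient.forall_mk_eq_imp_mk_eq_and_mk_eq_iff hle hwu hwv a),
      eq_div_iff (by simp [Nat.card_pos.ne']), ← Nat.cast_mul,
      Ideal.Quotient.card_units_fiber_factor_mul hle hw]
  · rw [Nat.cast_eq_zero, Nat.card_eq_zero]
    refine .inl ⟨fun ⟨a, ha⟩ => hcond ?_⟩
    obtain ⟨y, hy⟩ := Ideal.Quotient.mk_surjective (a : 𝓞 K ⧸ 𝔫)
    obtain ⟨hyu, hyv⟩ := ha y hy
    have hunit : IsUnit (Ideal.Quotient.mk 𝔫 y) := hy ▸ a.isUnit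
    exact ⟨hyu ▸ Ideal.Quotient.isUnit_mk_of_le h𝔞le hunit,
      hyv ▸ Ideal.Quotient.isUnit_mk_of_le h𝔟le hunit,
      Ideal.Quotient.exists_mk_eq_mk_and_mk_eq_mk_iff.mp ⟨y, hyu, hyv⟩⟩
end

section
/- For a positive integer n, φ₂(n) = φ(n)² · ∏_{p | n} (1 − 1/(p−1)), where φ₂(n) counts pairs (a₁, a₂) ∈ {1,…,n}² with gcd(a₁a₂, n) = 1 and gcd(a₁+a₂, n) = 1, and the product is over prime divisors of n. -/
/-!
Reduce modulo `n`: `φ₂(n)` counts pairs `(a, b)` of units of `ℤ/n` with `a + b` a unit, and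
writing `b = a c` shows this is `φ(n) · h(n)`, where `h(n)` counts the units `c` with `1 + c` a
unit. By the Chinese remainder theorem `h` is multiplicative. In a finite local ring the
non-units form an ideal, so no `c` has both `c` and `1 + c` non-units; hence `h(p^k)` is
`p^k` minus twice the number `p^(k-1)` of non-units, i.e. `φ(p^k) (1 - 1/(p-1))`.
-/

/-- `φ₂(n)`: the number of pairs `(a₁, a₂)` with `1 ≤ a₁, a₂ ≤ n`,
`gcd(a₁a₂, n) = 1` and `gcd(a₁+a₂, n) = 1`. -/
def phiTwo (n : ℕ) : ℕ :=
  (((Finset.Icc 1 n) ×ˢ (Finset.Icc 1 n)).filter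
    (fun a => Nat.gcd (a.1 * a.2) n = 1 ∧ Nat.gcd (a.1 + a.2) n = 1)).card

theorem Nat.card_isUnit (M : Type*) [Monoid M] : Nat.card {x : M // IsUnit x} = Nat.card Mˣ :=
  Nat.card_congr Submonoid.unitsTypeEquivIsUnitSubmonoid.toEquiv.symm

noncomputable def unitAddOneCount (R : Type*) [Ring R] : ℕ :=
  Nat.card {c : R // IsUnit c ∧ IsUnit (1 + c)}

theorem card_isUnit_pairs_eq_card_units_mul (R : Type*) [Ring R] :
    Nat.card {x : R × R // IsUnit x.1 ∧ IsUnit x.2 ∧ IsUnit (x.1 + x.2)} =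
      Nat.card Rˣ * unitAddOneCount R := by
  rw [unitAddOneCount, ← Nat.card_prod]
  symm
  exact Nat.card_congr
    { toFun := fun p => ⟨(p.1, p.1 * p.2), p.1.isUnit, p.1.isUnit.mul p.2.2.1, by
        rw [← mul_one (p.1 : R), mul_assoc, one_mul, ← mul_add]
        exact p.1.isUnit.mul p.2.2.2⟩
      invFun := fun x => (x.2.1.unit, ⟨x.2.1.unit⁻¹ * x.1.2, (x.2.1.unit⁻¹).isUnit.mul x.2.2.1, by
        rw [← x.2.1.val_inv_mul, ← mul_add]
        exact (x.2.1.unit⁻¹).isUnit.mul x.2.2.2⟩)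
      left_inv := fun p => by ext <;> simp
      right_inv := fun x => by ext <;> simp [← mul_assoc] }

theorem unitAddOneCount_congr {R S : Type*} [Ring R] [Ring S] (e : R ≃+* S) :
    unitAddOneCount R = unitAddOneCount S :=
  Nat.card_congr <| e.toEquiv.subtypeEquiv fun c => by
    rw [RingEquiv.toEquiv_eq_coe, EquivLike.coe_coe, ← map_one e, ← map_add, isUnit_map_iff,
      isUnit_map_iff]

theorem unitAddOneCount_prod (R S : Type*) [Ring R] [Ring S] :
    unitAddOneCount (R × S) = unitAddOneCount R * unitAddOneCount S := by
  rw [unitAddOneCount, unitAddOneCount, unitAddOneCount, ← Nat.card_prod]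
  refine Nat.card_congr <| (Equiv.subtypeEquivRight fun c => ?_).trans Equiv.subtypeProdEquivProd
  simp only [Prod.isUnit_iff, Prod.fst_add, Prod.snd_add, Prod.fst_one, Prod.snd_one]
  tauto

theorem unitAddOneCount_add_card (R : Type*) [Ring R] [IsLocalRing R] [Finite R] :
    unitAddOneCount R + Nat.card R = 2 * Nat.card Rˣ := by
  set U : Set R := {c | IsUnit c}
  have hcompl : {c : R | IsUnit c ∧ IsUnit (1 + c)}ᶜ = Uᶜ ∪ (1 + ·) ⁻¹' Uᶜ := by
    ext c
    simp [U, imp_iff_not_or]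
  have hdisj : Disjoint Uᶜ ((1 + ·) ⁻¹' Uᶜ) := by
    refine Set.disjoint_left.2 fun c hc h1c => ?_
    have : IsUnit (-c + (1 + c)) := by simp
    rcases IsLocalRing.isUnit_or_isUnit_of_isUnit_add this with h | h
    · exact hc ((IsUnit.neg_iff c).1 h)
    · exact h1c h
  have htrans : ((1 + ·) ⁻¹' Uᶜ).ncard = Uᶜ.ncard :=
    Set.ncard_preimage_of_injective_subset_range (add_right_injective 1)
      ((Equiv.addLeft (1 : R)).surjective.range_eq ▸ Set.subset_univ _)
  have hU : U.ncard = Nat.card Rˣ := Nat.card_isUnit R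
  have h1 := Set.ncard_add_ncard_compl {c : R | IsUnit c ∧ IsUnit (1 + c)}
  have h2 := Set.ncard_add_ncard_compl U
  rw [hcompl, Set.ncard_union_eq hdisj, htrans] at h1
  change Set.ncard {c : R | IsUnit c ∧ IsUnit (1 + c)} + _ = _
  omega

namespace ZMod

theorem isUnit_castHom_pow_iff {p k : ℕ} [NeZero p] (hk : k ≠ 0) (x : ZMod (p ^ k)) :
    IsUnit (castHom (dvd_pow_self p hk) (ZMod p) x) ↔ IsUnit x := by
  obtain ⟨m, rfl⟩ := natCast_zmod_surjective x
  rw [map_natCast, isUnit_iff_coprime, isUnit_iff_coprime, Nat.coprime_pow_right_iff (by omega)]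

theorem isLocalRing_prime_pow {p k : ℕ} (hp : p.Prime) (hk : k ≠ 0) :
    IsLocalRing (ZMod (p ^ k)) := by
  have : Fact p.Prime := ⟨hp⟩
  have : Fact (1 < p ^ k) := ⟨Nat.one_lt_pow hk hp.one_lt⟩
  refine .of_isUnit_or_isUnit_one_sub_self fun a => ?_
  set f := castHom (dvd_pow_self p hk) (ZMod p)
  refine (IsLocalRing.isUnit_or_isUnit_one_sub_self (f a)).imp (isUnit_castHom_pow_iff hk a).1
    fun h => (isUnit_castHom_pow_iff hk _).1 ?_
  rwa [map_sub, map_one]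

theorem unitAddOneCount_one : unitAddOneCount (ZMod 1) = 1 := by
  have (c : ZMod 1) : IsUnit c := isUnit_of_subsingleton c
  exact Nat.card_eq_one_iff_unique.2 ⟨inferInstance, ⟨⟨0, this 0, this _⟩⟩⟩

theorem unitAddOneCount_eq_totient_mul_prod {n : ℕ} (hn : n ≠ 0) :
    (unitAddOneCount (ZMod n) : ℚ) =
      n.totient * ∏ p ∈ n.primeFactors, (1 - 1 / ((p : ℚ) - 1)) := by
  induction n using Nat.recOnPosPrimePosCoprime with
  | zero => exact absurd rfl hn
  | one => simp [unitAddOneCount_one]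
  | prime_pow p k hp hk =>
    have := isLocalRing_prime_pow hp hk.ne'
    have : NeZero (p ^ k) := ⟨pow_ne_zero k hp.ne_zero⟩
    have hcount := unitAddOneCount_add_card (ZMod (p ^ k))
    rw [Nat.card_zmod, Nat.card_eq_fintype_card, card_units_eq_totient] at hcount
    have hq : (unitAddOneCount (ZMod (p ^ k)) : ℚ) + (p : ℚ) ^ k = 2 * (p ^ k).totient := by
      exact_mod_cast hcount
    have hp1 : (p : ℚ) - 1 ≠ 0 := sub_ne_zero.2 (by exact_mod_cast hp.one_lt.ne')
    have hpk : (p : ℚ) ^ k = p * p ^ (k - 1) := by rw [← pow_succ', Nat.sub_add_cancel hk]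
    rw [Nat.primeFactors_prime_pow hk.ne' hp, Finset.prod_singleton, eq_sub_of_add_eq hq,
      Nat.totient_prime_pow hp hk]
    push_cast [Nat.cast_sub hp.one_le, hpk]
    field_simp
    ring
  | coprime a b ha hb hab iha ihb =>
    rw [unitAddOneCount_congr (chineseRemainder hab), unitAddOneCount_prod, Nat.totient_mul hab,
      hab.primeFactors_mul, Finset.prod_union hab.disjoint_primeFactors]
    push_cast
    rw [iha (by omega), ihb (by omega)]
    ring

theorem val_natCast_sub_one_add_one {n a : ℕ} (ha : a ∈ Finset.Icc 1 n) :
    ((a : ZMod n) - 1).val + 1 = a := by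
  obtain ⟨h1, hn⟩ := Finset.mem_Icc.1 ha
  rw [← Nat.cast_pred h1, val_natCast_of_lt (by omega)]
  omega

theorem gcd_mul_eq_one_and_gcd_add_eq_one_iff (a b n : ℕ) :
    (Nat.gcd (a * b) n = 1 ∧ Nat.gcd (a + b) n = 1) ↔
      IsUnit (a : ZMod n) ∧ IsUnit (b : ZMod n) ∧ IsUnit ((a : ZMod n) + b) := by
  change (a * b).Coprime n ∧ (a + b).Coprime n ↔ _
  rw [Nat.coprime_mul_iff_left, and_assoc, ← Nat.cast_add, isUnit_iff_coprime, isUnit_iff_coprime,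
    isUnit_iff_coprime]

end ZMod

theorem phiTwo_eq_card_zmod (n : ℕ) [NeZero n] :
    phiTwo n = Nat.card {x : ZMod n × ZMod n // IsUnit x.1 ∧ IsUnit x.2 ∧ IsUnit (x.1 + x.2)} := by
  classical
  rw [Nat.card_eq_fintype_card, Fintype.card_subtype, phiTwo]
  refine Finset.card_nbij' (fun a => ((a.1 : ZMod n), (a.2 : ZMod n)))
    (fun x => ((x.1 - 1).val + 1, (x.2 - 1).val + 1)) ?_ ?_ ?_ ?_
  · rintro ⟨a, b⟩ hab
    simp only [Finset.coe_filter, Finset.mem_product] at hab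
    simpa [ZMod.gcd_mul_eq_one_and_gcd_add_eq_one_iff] using hab.2
  · rintro ⟨x, y⟩ hxy
    simp only [Finset.coe_filter, Finset.mem_univ, true_and] at hxy
    simpa [ZMod.val_lt, ZMod.gcd_mul_eq_one_and_gcd_add_eq_one_iff] using hxy
  · rintro ⟨a, b⟩ hab
    simp only [Finset.coe_filter, Finset.mem_product] at hab
    simp [ZMod.val_natCast_sub_one_add_one, hab.1.1, hab.1.2]
  · rintro ⟨x, y⟩ -
    simp

/-- **Carlitz's formula**: `φ₂(n) = φ(n)² · ∏_{p ∣ n} (1 − 1/(p−1))`. -/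
theorem phiTwo_formula (n : ℕ) (hn : 0 < n) :
    (phiTwo n : ℚ) = (Nat.totient n : ℚ) ^ 2 *
      ∏ p ∈ n.primeFactors, (1 - 1 / ((p : ℚ) - 1)) := by
  have : NeZero n := ⟨hn.ne'⟩
  rw [phiTwo_eq_card_zmod, card_isUnit_pairs_eq_card_units_mul, Nat.card_eq_fintype_card,
    ZMod.card_units_eq_totient, Nat.cast_mul, ZMod.unitAddOneCount_eq_totient_mul_prod hn.ne']
  ring
end
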